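/- Under the DMD-RSC scheme with learning rates η_t = 1/(γ Σ_{τ=1}^t |F_τ|) and approximation error ρ_t = η_t³/(2σ), for each t ∈ {1,…,T} (with the convention η_0 := η_1) the consecutive iterates satisfy ‖x_t − x_{t+1}‖ ≤ (η_t|F_t|G⋆ + η_t² + η_{t−1}²)/σ + η_{t−1}²ξG⋆/σ². -/

import Mathlib

open Finset

/-!
A DMD-RSC step from `c` minimizes `Φ z = ℓ z + B_ψ(z, c) / η` over `X`. At an exact minimizer `y`,
the first-order condition turns the Bregman three-point identity into
`Φ y + B_ψ(z, y) / η ≤ Φ z` for all `z ∈ X`. With `z = c` and strong convexity of `ψ` applied to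
`B_ψ(y, c) + B_ψ(c, y)` this gives `σ ‖c - y‖² ≤ η ℓ (c - y)`, so `‖c - y‖ ≤ η ‖ℓ‖ / σ`; with `z`
the `η³/(2σ)`-approximate minimizer it gives `‖z - y‖ ≤ η² / σ`. Hence
`‖x_t - x_{t+1}‖ ≤ (η_t |F_t| G⋆ + η_t²) / σ`, and the remaining terms of the bound are nonnegative.
-/

noncomputable section

variable {E : Type*} [NormedAddCommGroup E] [NormedSpace ℝ E]

def bregman (ψ : E → ℝ) (a b : E) : ℝ := ψ a - ψ b - fderiv ℝ ψ b (a - b)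

def BregmanStronglyConvexOn (ψ : E → ℝ) (X : Set E) (σ : ℝ) : Prop :=
  ∀ a ∈ X, ∀ b ∈ X, σ / 2 * ‖a - b‖ ^ 2 ≤ bregman ψ a b

/-- The map `B_t` of the DMD-RSC update is `mirrorStepObjective (∑ k ∈ F t, ∇f_k(x_t)) ψ η_t x_t`. -/
def mirrorStepObjective (L : E →L[ℝ] ℝ) (ψ : E → ℝ) (η : ℝ) (c z : E) : ℝ :=
  L z + bregman ψ z c / η

@[simp]
lemma bregman_self (ψ : E → ℝ) (a : E) : bregman ψ a a = 0 := by
  simp [bregman]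

lemma bregman_sub_bregman (ψ : E → ℝ) (z y c : E) :
    bregman ψ z c - bregman ψ y c
      = bregman ψ z y + (fderiv ℝ ψ y - fderiv ℝ ψ c) (z - y) := by
  simp only [bregman, sub_apply, map_sub]
  ring

lemma hasFDerivAt_bregman_left {ψ : E → ℝ} {y : E} (hψ : DifferentiableAt ℝ ψ y) (c : E) :
    HasFDerivAt (fun z => bregman ψ z c) (fderiv ℝ ψ y - fderiv ℝ ψ c) y := by
  have hlin : HasFDerivAt (fun z => fderiv ℝ ψ c (z - c)) (fderiv ℝ ψ c) y := by
    simpa only [map_sub] using (fderiv ℝ ψ c).hasFDerivAt.sub_const (fderiv ℝ ψ c c)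
  exact (hψ.hasFDerivAt.sub_const (ψ c)).sub hlin

lemma IsMinOn.hasFDerivAt_sub_nonneg {f : E → ℝ} {f' : E →L[ℝ] ℝ} {s : Set E} {a u : E}
    (h : IsMinOn f s a) (hf : HasFDerivAt f f' a) (hs : Convex ℝ s) (ha : a ∈ s)
    (hu : u ∈ s) : 0 ≤ f' (u - a) :=
  h.localize.hasFDerivWithinAt_nonneg hf.hasFDerivWithinAt
    (sub_mem_posTangentConeAt_of_segment_subset (hs.segment_subset ha hu))

section MirrorStep

variable {ψ : E → ℝ} {X : Set E} {L : E →L[ℝ] ℝ} {η σ : ℝ} {c y z : E}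

lemma IsMinOn.mirrorStepObjective_add_bregman_le
    (hmin : IsMinOn (mirrorStepObjective L ψ η c) X y) (hX : Convex ℝ X) (hy : y ∈ X)
    (hψ : DifferentiableAt ℝ ψ y) (hz : z ∈ X) :
    mirrorStepObjective L ψ η c y + bregman ψ z y / η ≤ mirrorStepObjective L ψ η c z := by
  have hD : HasFDerivAt (fun z => L z + bregman ψ z c * η⁻¹)
      (L + η⁻¹ • (fderiv ℝ ψ y - fderiv ℝ ψ c)) y :=
    L.hasFDerivAt.add ((hasFDerivAt_bregman_left hψ c).mul_const η⁻¹)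
  simp_rw [← div_eq_mul_inv] at hD
  have hopt := hmin.hasFDerivAt_sub_nonneg hD hX hy hz
  have hgap : mirrorStepObjective L ψ η c z - mirrorStepObjective L ψ η c y - bregman ψ z y / η
      = (L + η⁻¹ • (fderiv ℝ ψ y - fderiv ℝ ψ c)) (z - y) := by
    simp only [mirrorStepObjective, add_apply, smul_apply, smul_eq_mul, L.map_sub, div_eq_mul_inv]
    linear_combination η⁻¹ * bregman_sub_bregman ψ z y c
  linarith

lemma IsMinOn.norm_sub_le_of_mirrorStepObjective
    (hsc : BregmanStronglyConvexOn ψ X σ)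
    (hmin : IsMinOn (mirrorStepObjective L ψ η c) X y) (hX : Convex ℝ X) (hy : y ∈ X)
    (hψ : DifferentiableAt ℝ ψ y) (hc : c ∈ X) (hη : 0 < η) (hσ : 0 < σ) :
    ‖c - y‖ ≤ η * ‖L‖ / σ := by
  have hthree := hmin.mirrorStepObjective_add_bregman_le hX hy hψ hc
  have hsum : σ * ‖c - y‖ ^ 2 ≤ bregman ψ y c + bregman ψ c y := by
    have hyc := hsc y hy c hc
    have hcy := hsc c hc y hy
    rw [norm_sub_rev y c] at hyc
    linarith
  have hL : L (c - y) ≤ ‖L‖ * ‖c - y‖ := (le_abs_self _).trans (L.le_opNorm _)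
  simp only [mirrorStepObjective, bregman_self, zero_div, add_zero] at hthree
  have hquad : σ * ‖c - y‖ ^ 2 ≤ η * ‖L‖ * ‖c - y‖ := by
    calc σ * ‖c - y‖ ^ 2 ≤ η * ((bregman ψ y c + bregman ψ c y) / η) := by
          rwa [mul_div_cancel₀ _ hη.ne']
      _ ≤ η * L (c - y) := by
          gcongr
          rw [map_sub, add_div]
          linarith
      _ ≤ η * ‖L‖ * ‖c - y‖ := by
          rw [mul_assoc]
          gcongr
  rw [le_div_iff₀ hσ]
  rcases (norm_nonneg (c - y)).eq_or_lt with h0 | hpos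
  · rw [← h0, zero_mul]
    positivity
  · nlinarith

lemma IsMinOn.sq_norm_sub_le_of_mirrorStepObjective_le
    (hsc : BregmanStronglyConvexOn ψ X σ)
    (hmin : IsMinOn (mirrorStepObjective L ψ η c) X y) (hX : Convex ℝ X) (hy : y ∈ X)
    (hψ : DifferentiableAt ℝ ψ y) (hz : z ∈ X) (hη : 0 < η) {ρ : ℝ}
    (happrox : mirrorStepObjective L ψ η c z ≤ mirrorStepObjective L ψ η c y + ρ) :
    σ * ‖z - y‖ ^ 2 ≤ 2 * η * ρ := by
  have hthree := hmin.mirrorStepObjective_add_bregman_le hX hy hψ hz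
  have hbreg : bregman ψ z y ≤ η * ρ := by
    rw [← div_le_iff₀' hη]
    linarith
  linarith [hsc z hz y hy]

lemma IsMinOn.norm_sub_le_of_approx_mirrorStep
    (hsc : BregmanStronglyConvexOn ψ X σ)
    (hmin : IsMinOn (mirrorStepObjective L ψ η c) X y) (hX : Convex ℝ X) (hy : y ∈ X)
    (hψ : DifferentiableAt ℝ ψ y) (hc : c ∈ X) (hz : z ∈ X) (hη : 0 < η) (hσ : 0 < σ)
    (happrox : mirrorStepObjective L ψ η c z
      ≤ mirrorStepObjective L ψ η c y + η ^ 3 / (2 * σ)) :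
    ‖c - z‖ ≤ (η * ‖L‖ + η ^ 2) / σ := by
  have hcy := hmin.norm_sub_le_of_mirrorStepObjective hsc hX hy hψ hc hη hσ
  have hzy : ‖z - y‖ ≤ η ^ 2 / σ := by
    have hsq := hmin.sq_norm_sub_le_of_mirrorStepObjective_le hsc hX hy hψ hz hη happrox
    rw [le_div_iff₀ hσ]
    refine (pow_le_pow_iff_left₀ (by positivity) (by positivity) two_ne_zero).mp ?_
    calc (‖z - y‖ * σ) ^ 2 = σ * (σ * ‖z - y‖ ^ 2) := by ring
      _ ≤ σ * (2 * η * (η ^ 3 / (2 * σ))) := by gcongr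
      _ = (η ^ 2) ^ 2 := by field_simp
  calc ‖c - z‖ ≤ ‖c - y‖ + ‖z - y‖ := by
        simpa only [norm_sub_rev y z] using norm_sub_le_norm_sub_add_norm_sub c y z
    _ ≤ (η * ‖L‖ + η ^ 2) / σ := by
        rw [add_div]
        exact add_le_add hcy hzy

end MirrorStep

end

lemma forall_mem_Icc_of_succ {α : Type*} {s : Set α} {x : ℕ → α} {T : ℕ} (h1 : x 1 ∈ s)
    (hstep : ∀ t ∈ Icc 1 T, x t ∈ s → x (t + 1) ∈ s) : ∀ t ∈ Icc 1 T, x t ∈ s := by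
  intro t ht
  obtain ⟨ht1, htT⟩ := mem_Icc.mp ht
  clear ht
  induction t, ht1 using Nat.le_induction with
  | base => exact h1
  | succ n hn ih => exact hstep n (mem_Icc.mpr ⟨hn, by omega⟩) (ih (by omega))

lemma one_div_mul_sum_card_pos {γ : ℝ} {F : ℕ → Finset ℕ} {t : ℕ} (hγ : 0 < γ)
    (hF1 : (F 1).Nonempty) (ht : 1 ≤ t) : 0 < 1 / (γ * ∑ τ ∈ Icc 1 t, ((F τ).card : ℝ)) := by
  have hsum : 1 ≤ ∑ τ ∈ Icc 1 t, ((F τ).card : ℝ) :=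
    calc (1 : ℝ) ≤ (F 1).card := by exact_mod_cast hF1.card_pos
      _ ≤ ∑ τ ∈ Icc 1 t, ((F τ).card : ℝ) :=
        single_le_sum (f := fun τ => ((F τ).card : ℝ)) (fun _ _ => by positivity)
          (mem_Icc.mpr ⟨le_rfl, ht⟩)
  exact one_div_pos.mpr (mul_pos hγ (by linarith))

theorem dmd_rsc_iterate_stability_general
    {E : Type*} [NormedAddCommGroup E] [NormedSpace ℝ E]
    (X : Set E) (hX : Convex ℝ X)
    (T : ℕ) (d : ℕ → ℕ)
    (F : ℕ → Finset ℕ)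
    (hF : ∀ t, F t = (Finset.Icc 1 T).filter (fun k => k + d k - 1 = t))
    (f : ℕ → E → ℝ) (Gstar : ℝ)
    (hG : ∀ t ∈ Finset.Icc 1 T, ∀ z ∈ X, ‖fderiv ℝ (f t) z‖ ≤ Gstar)
    (ψ : E → ℝ) (σ γ ξ : ℝ) (hσ : 0 < σ) (hγ : 0 < γ) (hξ : 0 < ξ)
    (hψdiff : Differentiable ℝ ψ)
    (B : E → E → ℝ)
    (hB : ∀ a b, B a b = ψ a - ψ b - fderiv ℝ ψ b (a - b))
    (hψsc : ∀ a ∈ X, ∀ b ∈ X, B a b ≥ σ / 2 * ‖a - b‖ ^ 2)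
    (x : ℕ → E) (hx1 : x 1 ∈ X)
    (hF1 : (F 1).Nonempty)
    (ην : ℕ → ℝ)
    (hην : ∀ t ∈ Finset.Icc 1 T,
      ην t = 1 / (γ * ∑ τ ∈ Finset.Icc 1 t, ((F τ).card : ℝ)))
    (Bt : ℕ → E → ℝ)
    (hBt : ∀ t z, Bt t z =
      (∑ k ∈ F t, fderiv ℝ (f k) (x t) z) + B z (x t) / ην t)
    (hupd : ∀ t ∈ Finset.Icc 1 T, (F t).Nonempty →
      x (t + 1) ∈ X ∧ ∃ ystar ∈ X, IsMinOn (Bt t) X ystar ∧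
        Bt t (x (t + 1)) ≤ Bt t ystar + (ην t) ^ 3 / (2 * σ))
    (hupd0 : ∀ t ∈ Finset.Icc 1 T, F t = ∅ → x (t + 1) = x t)
    :
    ∀ t ∈ Finset.Icc 1 T,
      ‖x t - x (t + 1)‖
        ≤ (ην t * ((F t).card : ℝ) * Gstar + (ην t) ^ 2 + (ην (t - 1)) ^ 2) / σ
          + (ην (t - 1)) ^ 2 * ξ * Gstar / σ ^ 2 := by
  have hxX : ∀ t ∈ Icc 1 T, x t ∈ X := forall_mem_Icc_of_succ hx1 fun t ht hxt => by
    rcases (F t).eq_empty_or_nonempty with hFe | hFne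
    · rwa [hupd0 t ht hFe]
    · exact (hupd t ht hFne).1
  have hBreg : B = bregman ψ := funext₂ hB
  intro t ht
  have hG0 : 0 ≤ Gstar := (norm_nonneg _).trans (hG t ht _ (hxX t ht))
  suffices hstep : ‖x t - x (t + 1)‖ ≤ (ην t * ((F t).card : ℝ) * Gstar + ην t ^ 2) / σ by
    have : 0 ≤ ην (t - 1) ^ 2 / σ + ην (t - 1) ^ 2 * ξ * Gstar / σ ^ 2 := by positivity
    rw [add_div _ (ην (t - 1) ^ 2)]
    linarith
  rcases (F t).eq_empty_or_nonempty with hFe | hFne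
  · rw [hupd0 t ht hFe, hFe, sub_self, norm_zero, card_empty, Nat.cast_zero, mul_zero,
      zero_mul, zero_add]
    positivity
  obtain ⟨hxX', y, hy, hmin, happrox⟩ := hupd t ht hFne
  have hη : 0 < ην t := hην t ht ▸ one_div_mul_sum_card_pos hγ hF1 (mem_Icc.mp ht).1
  set L : E →L[ℝ] ℝ := ∑ k ∈ F t, fderiv ℝ (f k) (x t)
  have hL : ‖L‖ ≤ (F t).card * Gstar :=
    calc ‖L‖ ≤ ∑ _k ∈ F t, Gstar := norm_sum_le_of_le _ fun k hk =>
          hG k (by rw [hF t] at hk; exact (mem_filter.mp hk).1) _ (hxX t ht)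
      _ = (F t).card * Gstar := by rw [sum_const, nsmul_eq_mul]
  have hBt' : Bt t = mirrorStepObjective L ψ (ην t) (x t) := by
    funext z
    rw [hBt, hBreg, mirrorStepObjective, _root_.sum_apply]
  rw [hBt'] at hmin happrox
  calc ‖x t - x (t + 1)‖ ≤ (ην t * ‖L‖ + ην t ^ 2) / σ :=
        hmin.norm_sub_le_of_approx_mirrorStep (fun a ha b hb => hBreg ▸ hψsc a ha b hb) hX hy (hψdiff y) (hxX t ht)
          hxX' hη hσ happrox
    _ ≤ _ := by
        rw [mul_assoc]
        gcongr

/-- DMD-RSC stability of consecutive iterates (Lemma 9), with the convention η₀ := η₁. -/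
theorem dmd_rsc_iterate_stability
    {E : Type*} [NormedAddCommGroup E] [NormedSpace ℝ E]
    (X : Set E) (hXne : X.Nonempty) (hX : Convex ℝ X)
    (R : ℝ) (hR : ∀ z ∈ X, ‖z‖ ≤ R)
    (T : ℕ) (hT : 1 ≤ T) (d : ℕ → ℕ)
    (hd : ∀ t ∈ Finset.Icc 1 T, 1 ≤ d t ∧ t + d t - 1 ≤ T)
    (F : ℕ → Finset ℕ)
    (hF : ∀ t, F t = (Finset.Icc 1 T).filter (fun k => k + d k - 1 = t))
    (f : ℕ → E → ℝ) (Gstar : ℝ)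
    (hfdiff : ∀ t ∈ Finset.Icc 1 T, Differentiable ℝ (f t))
    (hG : ∀ t ∈ Finset.Icc 1 T, ∀ z ∈ X, ‖fderiv ℝ (f t) z‖ ≤ Gstar)
    (ψ : E → ℝ) (σ γ ξ : ℝ) (hσ : 0 < σ) (hγ : 0 < γ) (hξ : 0 < ξ)
    (hψdiff : Differentiable ℝ ψ)
    (B : E → E → ℝ)
    (hB : ∀ a b, B a b = ψ a - ψ b - fderiv ℝ ψ b (a - b))
    (hψsc : ∀ a ∈ X, ∀ b ∈ X, B a b ≥ σ / 2 * ‖a - b‖ ^ 2)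
    (hψlip : ∀ a ∈ X, ∀ b ∈ X,
      ‖fderiv ℝ ψ a - fderiv ℝ ψ b‖ ≤ ξ * Gstar * ‖a - b‖)
    (hrel : ∀ t ∈ Finset.Icc 1 T, ∀ a ∈ X, ∀ b ∈ X,
      f t a - f t b - fderiv ℝ (f t) b (a - b) ≥ γ * B a b)
    (x : ℕ → E) (hx1 : x 1 ∈ X)
    (hF1 : (F 1).Nonempty)
    (ην : ℕ → ℝ)
    (hην : ∀ t ∈ Finset.Icc 1 T,
      ην t = 1 / (γ * ∑ τ ∈ Finset.Icc 1 t, ((F τ).card : ℝ)))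
    (Bt : ℕ → E → ℝ)
    (hBt : ∀ t z, Bt t z =
      (∑ k ∈ F t, fderiv ℝ (f k) (x t) z) + B z (x t) / ην t)
    (hη0 : ην 0 = ην 1)
    (hupd : ∀ t ∈ Finset.Icc 1 T, (F t).Nonempty →
      x (t + 1) ∈ X ∧ ∃ ystar ∈ X, IsMinOn (Bt t) X ystar ∧
        Bt t (x (t + 1)) ≤ Bt t ystar + (ην t) ^ 3 / (2 * σ))
    (hupd0 : ∀ t ∈ Finset.Icc 1 T, F t = ∅ → x (t + 1) = x t)
    :
    ∀ t ∈ Finset.Icc 1 T,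
      ‖x t - x (t + 1)‖
        ≤ (ην t * ((F t).card : ℝ) * Gstar + (ην t) ^ 2 + (ην (t - 1)) ^ 2) / σ
          + (ην (t - 1)) ^ 2 * ξ * Gstar / σ ^ 2 :=
  dmd_rsc_iterate_stability_general X hX T d F hF f Gstar hG ψ σ γ ξ hσ hγ hξ hψdiff B hB hψsc x hx1
    hF1 ην hην Bt hBt hupd hupd0
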